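/- arXiv:math/0508028 — 2 statements merged into one kernel-verified Lean document; each statement's English description precedes it below -/
import Mathlib

section
/- Let H be a complex Hilbert space, 𝔄 a C*-algebra acting on H, σ : 𝔄 → B(H) a linear map, and d : 𝔄 → B(H) a continuous σ-derivation. Then every A in the separating space 𝔖(σ) annihilates the range of d: A·d(B) = 0 and d(B)·A = 0 for all B ∈ 𝔄. -/
open Filter Topology

/-!
If `y n → 0` and `σ (y n) → A`, then continuity of `d` at `0` gives `d (y n * b) → 0` and
`d (y n) * σ b → 0`, so by the Leibniz rule `σ (y n) * d b → 0`; its limit is also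
`A * d b`, which therefore vanishes. The same argument with `b * y n` gives `d b * A = 0`.
-/

def separatingSpace {X Y : Type*} [Zero X] [TopologicalSpace X] [TopologicalSpace Y]
    (T : X → Y) : Set Y :=
  {z | ∃ x : ℕ → X, Tendsto x atTop (𝓝 0) ∧ Tendsto (fun n => T (x n)) atTop (𝓝 z)}

section Leibniz

variable {R S : Type*} [NonUnitalRing R] [TopologicalSpace R] [ContinuousMul R]
  [NonUnitalRing S] [TopologicalSpace S] [IsTopologicalRing S] [T2Space S]
  {σ d : R → S}

theorem mul_apply_eq_zero_of_mem_separatingSpace (hd : Tendsto d (𝓝 0) (𝓝 0))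
    (hleib : ∀ a b, d (a * b) = d a * σ b + σ a * d b) {A : S}
    (hA : A ∈ separatingSpace σ) (b : R) : A * d b = 0 := by
  obtain ⟨y, hy0, hyA⟩ := hA
  have hyb : Tendsto (fun n => d (y n * b)) atTop (𝓝 0) :=
    hd.comp (by simpa using hy0.mul_const b)
  have hdy : Tendsto (fun n => d (y n) * σ b) atTop (𝓝 0) := by
    simpa using (hd.comp hy0).mul_const (σ b)
  have hσy : Tendsto (fun n => σ (y n) * d b) atTop (𝓝 0) := by
    simpa [hleib] using hyb.sub hdy
  exact tendsto_nhds_unique (hyA.mul_const (d b)) hσy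

theorem apply_mul_eq_zero_of_mem_separatingSpace (hd : Tendsto d (𝓝 0) (𝓝 0))
    (hleib : ∀ a b, d (a * b) = d a * σ b + σ a * d b) {A : S}
    (hA : A ∈ separatingSpace σ) (b : R) : d b * A = 0 := by
  obtain ⟨y, hy0, hyA⟩ := hA
  have hby : Tendsto (fun n => d (b * y n)) atTop (𝓝 0) :=
    hd.comp (by simpa using hy0.const_mul b)
  have hdy : Tendsto (fun n => σ b * d (y n)) atTop (𝓝 0) := by
    simpa using (hd.comp hy0).const_mul (σ b)
  have hσy : Tendsto (fun n => d b * σ (y n)) atTop (𝓝 0) := by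
    simpa [hleib] using hby.sub hdy
  exact tendsto_nhds_unique (hyA.const_mul (d b)) hσy

end Leibniz

theorem stmt_6_general {H : Type*} [NormedAddCommGroup H] [InnerProductSpace ℂ H]
    [CompleteSpace H]
    (𝔄 : NonUnitalStarSubalgebra ℂ (H →L[ℂ] H))
    (σ d : 𝔄 →ₗ[ℂ] (H →L[ℂ] H))
    (hd_cont : Continuous d)
    (hd : ∀ A B : 𝔄, d (A * B) = d A * σ B + σ A * d B)
    (A : H →L[ℂ] H)
    (hA : ∃ y : ℕ → 𝔄, Tendsto y atTop (𝓝 0) ∧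
      Tendsto (fun n => σ (y n)) atTop (𝓝 A))
    (B : 𝔄) :
    A * d B = 0 ∧ d B * A = 0 := by
  have hd0 : Tendsto d (𝓝 0) (𝓝 0) := hd_cont.tendsto' 0 0 (map_zero d)
  exact ⟨mul_apply_eq_zero_of_mem_separatingSpace hd0 hd hA B,
    apply_mul_eq_zero_of_mem_separatingSpace hd0 hd hA B⟩

/-- **Lemma 3.1.** Let `𝔄` be a C*-algebra acting on a Hilbert space `H` (a norm-closed
star-subalgebra of `B(H)`), `σ : 𝔄 → B(H)` a linear map and `d : 𝔄 → B(H)` a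
continuous `σ`-derivation. Then every `A ∈ 𝔖(σ)` annihilates the range of `d`. -/
theorem stmt_6 {H : Type*} [NormedAddCommGroup H] [InnerProductSpace ℂ H]
    [CompleteSpace H]
    (𝔄 : NonUnitalStarSubalgebra ℂ (H →L[ℂ] H))
    (hcl : IsClosed (𝔄 : Set (H →L[ℂ] H)))
    (σ d : 𝔄 →ₗ[ℂ] (H →L[ℂ] H))
    (hd_cont : Continuous d)
    (hd : ∀ A B : 𝔄, d (A * B) = d A * σ B + σ A * d B)
    (A : H →L[ℂ] H)
    (hA : ∃ y : ℕ → 𝔄, Tendsto y atTop (𝓝 0) ∧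
      Tendsto (fun n => σ (y n)) atTop (𝓝 A))
    (B : 𝔄) :
    A * d B = 0 ∧ d B * A = 0 :=
  stmt_6_general 𝔄 σ d hd_cont hd A hA B
end

section
/- Let H be a complex Hilbert space, 𝔄 a C*-algebra acting on H, σ : 𝔄 → B(H) a continuous linear map, and d : 𝔄 → B(H) a *-σ-derivation. Then there exist a continuous *-homomorphism Σ : 𝔄 → B(H) (linear, multiplicative, and satisfying Σ(A*) = Σ(A)*) and a *-Σ-derivation D : 𝔄 → B(H) such that D is continuous if and only if d is continuous. -/
/-!
Replacing `σ` by its real part `τ = (σ + σ⋆)/2`, where `σ⋆ a = (σ a⋆)⋆`, keeps `d` a derivation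
and makes `τ` star-preserving. The defect `Φ(a, b) = τ a τ b - τ (a b)` satisfies
`d a Φ(b, c) = Φ(a, b) d c`, a cocycle identity, and `Φ(a, b)⋆ = Φ(b⋆, a⋆)`; hence the closed
subspace `N` on which every `Φ(a, b)` vanishes reduces every `τ c` and `d c`. Compressing by the
projection `P` onto `N` gives a multiplicative `Σ = τ P` and a `Σ`-derivation `D = d P`.
If `D` is continuous, the separating operator `S` of `d` from the closed graph theorem satisfies
`S P = 0` and `S Φ(b, c) = 0`; the latter puts the range of `S⋆` inside `N`, so `S = S P = 0`.
-/

open Filter Topology WithConv ComplexStarModule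

instance StarMemClass.continuousStar {S A : Type*} [SetLike S A] [Star A] [StarMemClass S A]
    [TopologicalSpace A] [ContinuousStar A] (s : S) : ContinuousStar s :=
  ⟨continuous_induced_rng.mpr (continuous_star.comp continuous_subtype_val)⟩

section RealPart

variable {A B : Type*} [AddCommGroup A] [Module ℂ A] [StarAddMonoid A] [StarModule ℂ A]
  [AddCommGroup B] [Module ℂ B] [StarAddMonoid B] [StarModule ℂ B]

noncomputable def intrinsicRealPart (σ : A →ₗ[ℂ] B) : A →ₗ[ℂ] B :=
  ofConv (ℜ (toConv σ) : WithConv (A →ₗ[ℂ] B))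

theorem intrinsicRealPart_apply (σ : A →ₗ[ℂ] B) (a : A) :
    intrinsicRealPart σ a = (2⁻¹ : ℂ) • (σ a + star (σ (star a))) := by
  simp [intrinsicRealPart, realPart_apply_coe, ← Complex.coe_smul]

theorem intrinsicRealPart_map_star (σ : A →ₗ[ℂ] B) (a : A) :
    intrinsicRealPart σ (star a) = star (intrinsicRealPart σ a) :=
  (LinearMap.IntrinsicStar.isSelfAdjoint_iff_map_star _).1 (ℜ (toConv σ)).2 a

theorem continuous_intrinsicRealPart [TopologicalSpace A] [ContinuousStar A] [TopologicalSpace B]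
    [IsTopologicalAddGroup B] [ContinuousStar B] [ContinuousConstSMul ℂ B] {σ : A →ₗ[ℂ] B}
    (hσ : Continuous σ) : Continuous (intrinsicRealPart σ) := by
  rw [show ⇑(intrinsicRealPart σ) = fun a ↦ (2⁻¹ : ℂ) • (σ a + star (σ (star a))) from
    funext (intrinsicRealPart_apply σ)]
  fun_prop

end RealPart

section Derivation

variable {A B : Type*} [NonUnitalRing A] [Module ℂ A] [NonUnitalRing B] [Module ℂ B]

def IsSigmaDerivation (σ d : A →ₗ[ℂ] B) : Prop :=
  ∀ a b, d (a * b) = d a * σ b + σ a * d b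

theorem IsSigmaDerivation.intrinsicRealPart [StarRing A] [StarModule ℂ A] [StarRing B]
    [StarModule ℂ B] [IsScalarTower ℂ B B] [SMulCommClass ℂ B B] {σ d : A →ₗ[ℂ] B}
    (hd : IsSigmaDerivation σ d) (hd_star : ∀ a, d (star a) = star (d a)) :
    IsSigmaDerivation (intrinsicRealPart σ) d := by
  intro a b
  have hd' : d (a * b) = d a * star (σ (star b)) + star (σ (star a)) * d b := by
    have h := congrArg star (hd (star b) (star a))
    rwa [← star_mul, hd_star, star_star, star_add, star_mul, star_mul, ← hd_star, ← hd_star,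
      star_star, star_star, add_comm] at h
  simp only [intrinsicRealPart_apply, mul_smul_comm, smul_mul_assoc, mul_add, add_mul]
  linear_combination (norm := module) (2⁻¹ : ℂ) • hd a b + (2⁻¹ : ℂ) • hd'

def mulDefect (τ : A →ₗ[ℂ] B) (a b : A) : B :=
  τ a * τ b - τ (a * b)

theorem mulDefect_mul (τ : A →ₗ[ℂ] B) (a b c : A) :
    mulDefect τ a b * τ c =
      τ a * mulDefect τ b c + mulDefect τ a (b * c) - mulDefect τ (a * b) c := by
  simp only [mulDefect, mul_assoc]
  noncomm_ring

theorem star_mulDefect [StarRing A] [StarRing B] {τ : A →ₗ[ℂ] B}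
    (hτ : ∀ a, τ (star a) = star (τ a)) (a b : A) :
    star (mulDefect τ a b) = mulDefect τ (star b) (star a) := by
  rw [mulDefect, mulDefect, ← star_mul, hτ, hτ, hτ, star_sub, star_mul]

theorem IsSigmaDerivation.mul_mulDefect {τ d : A →ₗ[ℂ] B} (hd : IsSigmaDerivation τ d)
    (a b c : A) : d a * mulDefect τ b c = mulDefect τ a b * d c := by
  have h := (hd (a * b) c).symm.trans (mul_assoc a b c ▸ hd a (b * c))
  rw [hd, hd] at h
  simp only [mulDefect, mul_sub, sub_mul]
  linear_combination (norm := noncomm_ring) h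

end Derivation

theorem IsIdempotentElem.mul_mul_mul_of_commute {B : Type*} [Semigroup B] {P y : B}
    (hP : IsIdempotentElem P) (hy : Commute P y) (x : B) : x * P * (y * P) = x * y * P := by
  rw [← hy.eq, mul_assoc, ← mul_assoc P, hP.eq, hy.eq, ← mul_assoc]

section Compression

variable {A B : Type*} [NonUnitalRing A] [Module ℂ A]
  [NonUnitalRing B] [Module ℂ B] [IsScalarTower ℂ B B]
  {P : B} {τ d : A →ₗ[ℂ] B}

theorem IsSigmaDerivation.mulRight_comp (hd : IsSigmaDerivation τ d) (hP : IsIdempotentElem P)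
    (hτP : ∀ b, Commute P (τ b)) (hdP : ∀ b, Commute P (d b)) :
    IsSigmaDerivation (LinearMap.mulRight ℂ P ∘ₗ τ) (LinearMap.mulRight ℂ P ∘ₗ d) := by
  intro a b
  simp only [LinearMap.comp_apply, LinearMap.mulRight_apply, hd a b, add_mul,
    hP.mul_mul_mul_of_commute (hτP b), hP.mul_mul_mul_of_commute (hdP b)]

theorem mulRight_comp_map_mul (hP : IsIdempotentElem P) (hτP : ∀ b, Commute P (τ b))
    (hΦP : ∀ a b, mulDefect τ a b * P = 0) (a b : A) :
    (LinearMap.mulRight ℂ P ∘ₗ τ) (a * b) =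
      (LinearMap.mulRight ℂ P ∘ₗ τ) a * (LinearMap.mulRight ℂ P ∘ₗ τ) b := by
  simp only [LinearMap.comp_apply, LinearMap.mulRight_apply, hP.mul_mul_mul_of_commute (hτP b)]
  rw [← sub_eq_zero, ← sub_mul, ← neg_eq_zero, ← neg_mul, neg_sub]
  exact hΦP a b

theorem mulRight_comp_map_star [StarRing A] [StarRing B] (hP : IsSelfAdjoint P)
    (hτP : ∀ b, Commute P (τ b)) (hτ : ∀ a, τ (star a) = star (τ a)) (a : A) :
    (LinearMap.mulRight ℂ P ∘ₗ τ) (star a) = star ((LinearMap.mulRight ℂ P ∘ₗ τ) a) := by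
  rw [LinearMap.comp_apply, LinearMap.comp_apply, LinearMap.mulRight_apply,
    LinearMap.mulRight_apply, star_mul, hP.star_eq, ← hτ, (hτP _).eq]

end Compression

theorem Submodule.commute_starProjection_of_mem_invtSubmodule {H : Type*} [NormedAddCommGroup H]
    [InnerProductSpace ℂ H] [CompleteSpace H] {K : Submodule ℂ H} [K.HasOrthogonalProjection]
    {T : H →L[ℂ] H} (hT : K ∈ Module.End.invtSubmodule (T : H →ₗ[ℂ] H))
    (hT_adjoint : K ∈ Module.End.invtSubmodule (T.adjoint : H →ₗ[ℂ] H)) :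
    Commute K.starProjection T := by
  rw [ContinuousLinearMap.IsIdempotentElem.commute_iff K.isIdempotentElem_starProjection,
    Submodule.range_starProjection, Submodule.ker_starProjection,
    ← ContinuousLinearMap.mem_invtSubmodule_adjoint_iff]
  exact ⟨hT, hT_adjoint⟩

section MultiplicativeSubspace

variable {A H : Type*} [NonUnitalRing A] [Module ℂ A]
  [NormedAddCommGroup H] [InnerProductSpace ℂ H] {τ d : A →ₗ[ℂ] (H →L[ℂ] H)}

def multiplicativeSubspace (τ : A →ₗ[ℂ] (H →L[ℂ] H)) : Submodule ℂ H :=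
  ⨅ a, ⨅ b, (mulDefect τ a b).ker

theorem mem_multiplicativeSubspace {ξ : H} :
    ξ ∈ multiplicativeSubspace τ ↔ ∀ a b, mulDefect τ a b ξ = 0 := by
  simp [multiplicativeSubspace]

theorem isClosed_multiplicativeSubspace (τ : A →ₗ[ℂ] (H →L[ℂ] H)) :
    IsClosed (multiplicativeSubspace τ : Set H) := by
  simp only [multiplicativeSubspace, Submodule.coe_iInf]
  exact isClosed_iInter fun a ↦ isClosed_iInter fun b ↦ (mulDefect τ a b).isClosed_ker

theorem multiplicativeSubspace_mem_invtSubmodule (c : A) :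
    multiplicativeSubspace τ ∈ Module.End.invtSubmodule (τ c : H →ₗ[ℂ] H) := by
  refine (Module.End.mem_invtSubmodule_iff_forall_mem_of_mem _).2 fun ξ hξ ↦ ?_
  rw [mem_multiplicativeSubspace] at hξ ⊢
  intro a b
  have h := congr($(mulDefect_mul τ a b c) ξ)
  simp only [mul_apply_eq_comp, add_apply, sub_apply, hξ, map_zero, add_zero, sub_zero] at h
  exact h

theorem IsSigmaDerivation.multiplicativeSubspace_mem_invtSubmodule (hd : IsSigmaDerivation τ d)
    (c : A) : multiplicativeSubspace τ ∈ Module.End.invtSubmodule (d c : H →ₗ[ℂ] H) := by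
  refine (Module.End.mem_invtSubmodule_iff_forall_mem_of_mem _).2 fun ξ hξ ↦ ?_
  rw [mem_multiplicativeSubspace] at hξ ⊢
  intro a b
  have h := congr($(hd.mul_mulDefect a b c) ξ)
  simp only [mul_apply_eq_comp, hξ, map_zero] at h
  exact h.symm

variable [CompleteSpace H]

instance (τ : A →ₗ[ℂ] (H →L[ℂ] H)) : CompleteSpace (multiplicativeSubspace τ) :=
  (isClosed_multiplicativeSubspace τ).completeSpace_coe

theorem mulDefect_mul_starProjection (a b : A) :
    mulDefect τ a b * (multiplicativeSubspace τ).starProjection = 0 := by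
  ext ξ
  exact mem_multiplicativeSubspace.1 (Submodule.starProjection_apply_mem _ ξ) a b

theorem starProjection_multiplicativeSubspace_mul_eq_self {T : H →L[ℂ] H}
    (hT : ∀ a b, mulDefect τ a b * T = 0) : (multiplicativeSubspace τ).starProjection * T = T := by
  ext ξ
  exact Submodule.starProjection_eq_self_iff.2 <| mem_multiplicativeSubspace.2 fun a b ↦
    congr($(hT a b) ξ)

variable [StarRing A]

theorem commute_starProjection_multiplicativeSubspace_of_mem_invtSubmodule {T : A → H →L[ℂ] H}
    (hT_star : ∀ c, T (star c) = star (T c))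
    (hT : ∀ c, multiplicativeSubspace τ ∈ Module.End.invtSubmodule (T c : H →ₗ[ℂ] H)) (c : A) :
    Commute (multiplicativeSubspace τ).starProjection (T c) :=
  Submodule.commute_starProjection_of_mem_invtSubmodule (hT c) <| by
    rw [← ContinuousLinearMap.star_eq_adjoint, ← hT_star]
    exact hT (star c)

end MultiplicativeSubspace

section Continuity

variable {A H : Type*} [NonUnitalNormedRing A] [NormedSpace ℂ A]
  [NormedAddCommGroup H] [InnerProductSpace ℂ H] [CompleteSpace H] {τ d : A →ₗ[ℂ] (H →L[ℂ] H)}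

theorem IsSigmaDerivation.mul_mulDefect_eq_zero_of_tendsto (hd : IsSigmaDerivation τ d)
    (hτ : Continuous τ) {v : ℕ → A} {S : H →L[ℂ] H} (hv : Tendsto v atTop (𝓝 0))
    (hdv : Tendsto (fun n ↦ d (v n)) atTop (𝓝 S)) (b c : A) : S * mulDefect τ b c = 0 := by
  have hleft : Tendsto (fun n ↦ d (v n) * mulDefect τ b c) atTop (𝓝 (S * mulDefect τ b c)) :=
    hdv.mul_const _
  have hright : Tendsto (fun n ↦ mulDefect τ (v n) b * d c) atTop (𝓝 0) := by
    have hcont : Continuous fun x ↦ mulDefect τ x b * d c := by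
      unfold mulDefect
      fun_prop
    simpa [mulDefect, Function.comp_def] using (hcont.tendsto 0).comp hv
  simp only [hd.mul_mulDefect] at hleft
  exact tendsto_nhds_unique hleft hright

theorem IsSigmaDerivation.continuous_of_continuous_mulRight_comp [StarRing A] [CompleteSpace A]
    (hd : IsSigmaDerivation τ d) (hτ : Continuous τ) (hτ_star : ∀ a, τ (star a) = star (τ a))
    (hD : Continuous (LinearMap.mulRight ℂ (multiplicativeSubspace τ).starProjection ∘ₗ d)) :
    Continuous d := by
  set P := (multiplicativeSubspace τ).starProjection
  refine d.continuous_of_seq_closed_graph fun u x y hu hy ↦ ?_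
  set S := y - d x
  have hv : Tendsto (fun n ↦ u n - x) atTop (𝓝 0) := by
    simpa using hu.sub_const x
  have hdv : Tendsto (fun n ↦ d (u n - x)) atTop (𝓝 S) := by
    simpa only [map_sub, Function.comp_def] using hy.sub_const (d x)
  have hSP : S * P = 0 := by
    have h := (hD.tendsto 0).comp hv
    simp only [map_zero, Function.comp_def, LinearMap.comp_apply,
      LinearMap.mulRight_apply] at h
    exact tendsto_nhds_unique (hdv.mul_const P) h
  have hSΦ := hd.mul_mulDefect_eq_zero_of_tendsto hτ hv hdv
  -- `S⋆` has range in `N`, so `S = (P S⋆)⋆ = S P`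
  have hPS : P * star S = star S := starProjection_multiplicativeSubspace_mul_eq_self fun a b ↦ by
    rw [← star_star (mulDefect τ a b), star_mulDefect hτ_star, ← star_mul, hSΦ, star_zero]
  have hS : S = 0 := by
    rw [← star_star S, ← hPS, star_mul, star_star, (isSelfAdjoint_starProjection _).star_eq, hSP]
  exact sub_eq_zero.1 hS

end Continuity

/-- **Proposition 3.6.** Let `𝔄` be a C*-algebra acting on a Hilbert space `H`,
`σ : 𝔄 → B(H)` a continuous linear map and `d : 𝔄 → B(H)` a `*`-`σ`-derivation.
Then there exist a continuous `*`-homomorphism `Σ : 𝔄 → B(H)` and a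
`*`-`Σ`-derivation `D : 𝔄 → B(H)` such that `D` is continuous iff `d` is. -/
theorem stmt_12 {H : Type*} [NormedAddCommGroup H] [InnerProductSpace ℂ H]
    [CompleteSpace H]
    (𝔄 : NonUnitalStarSubalgebra ℂ (H →L[ℂ] H))
    (hcl : IsClosed (𝔄 : Set (H →L[ℂ] H)))
    (σ d : 𝔄 →ₗ[ℂ] (H →L[ℂ] H))
    (hσ_cont : Continuous σ)
    (hd : ∀ A B : 𝔄, d (A * B) = d A * σ B + σ A * d B)
    (hd_star : ∀ A : 𝔄, d (star A) = star (d A)) :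
    ∃ Sig D : 𝔄 →ₗ[ℂ] (H →L[ℂ] H),
      Continuous Sig ∧
      (∀ A B : 𝔄, Sig (A * B) = Sig A * Sig B) ∧
      (∀ A : 𝔄, Sig (star A) = star (Sig A)) ∧
      (∀ A B : 𝔄, D (A * B) = D A * Sig B + Sig A * D B) ∧
      (∀ A : 𝔄, D (star A) = star (D A)) ∧
      (Continuous D ↔ Continuous d) := by
  have : CompleteSpace 𝔄 := hcl.completeSpace_coe
  set τ := intrinsicRealPart σ
  have hτ_star : ∀ a, τ (star a) = star (τ a) := intrinsicRealPart_map_star σ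
  have hτ : Continuous τ := continuous_intrinsicRealPart hσ_cont
  have hdτ : IsSigmaDerivation τ d := IsSigmaDerivation.intrinsicRealPart hd hd_star
  set P := (multiplicativeSubspace τ).starProjection
  have hP : IsSelfAdjoint P := isSelfAdjoint_starProjection _
  have hP_idem : IsIdempotentElem P := Submodule.isIdempotentElem_starProjection _
  have hτP : ∀ c, Commute P (τ c) :=
    commute_starProjection_multiplicativeSubspace_of_mem_invtSubmodule hτ_star
      multiplicativeSubspace_mem_invtSubmodule
  have hdP : ∀ c, Commute P (d c) :=
    commute_starProjection_multiplicativeSubspace_of_mem_invtSubmodule hd_star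
      hdτ.multiplicativeSubspace_mem_invtSubmodule
  refine ⟨LinearMap.mulRight ℂ P ∘ₗ τ, LinearMap.mulRight ℂ P ∘ₗ d,
    (continuous_mul_const P).comp hτ, mulRight_comp_map_mul hP_idem hτP mulDefect_mul_starProjection,
    mulRight_comp_map_star hP hτP hτ_star, hdτ.mulRight_comp hP_idem hτP hdP,
    mulRight_comp_map_star hP hdP hd_star,
    ⟨hdτ.continuous_of_continuous_mulRight_comp hτ hτ_star, (continuous_mul_const P).comp⟩⟩
end
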